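/- Let T > 0 and μ > 0, let z₀ ∈ C([0,T];ℝ), let a be continuous on D₁ = {(t,s) : 0 ≤ s ≤ t ≤ T} and b continuous on D₂ = {(t,s,σ) : 0 ≤ s ≤ t, 0 ≤ σ ≤ t, t ≤ T}, with ā := max|a|, b̄ := max|b|. Set c₀ := ‖z₀‖_μ, α := ā(1 − e^{−μT})/μ, β := b̄(cosh(μT) − 1)/μ², and let φ(ξ) := βξ² + (α − 1)ξ + c₀. Assume α < 1, c₀β ≤ (1/4)(α − 1)², and c₀ ≤ r̄, where r̄ is the largest real root of φ. Then the set M := {z ∈ C([0,T];ℝ) : ‖z‖_μ ≤ r̄} is invariant under the operator S, i.e. ‖z‖_μ ≤ r̄ implies ‖Sz‖_μ ≤ r̄, where (Sz)(t) := z₀(t) + ∫₀ᵗ a(t,s)z(s) ds + (1/2)∫₀ᵗ∫₀ᵗ b(t,s,σ)z(s)z(σ) ds dσ. -/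

import Mathlib

/-! Since `|z s| ≤ ‖z‖_μ e^{μs}`, the kernel bounds give
`|∫₀ᵗ a z| ≤ ā ‖z‖_μ E(t)` and `|∫₀ᵗ∫₀ᵗ b z z| ≤ b̄ ‖z‖_μ² E(t)²` with `E(t) = (e^{μt} - 1)/μ`.
After multiplication by `e^{-μt}` these are at most `α ‖z‖_μ` and `2β ‖z‖_μ²`, because
`e^{-x} (e^x - 1)² = 2 (cosh x - 1)` and both weights increase in `t`. Hence `‖z‖_μ ≤ r̄` gives
`‖Sz‖_μ ≤ c₀ + α r̄ + β r̄² = r̄`, the last equality being `φ(r̄) = 0`. -/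

open MeasureTheory Set

/-- The weighted norm `‖z‖_μ = max_{0 ≤ t ≤ T} e^{−μt}|z(t)|` on `C([0,T];ℝ)`. -/
noncomputable def wnorm (μ T : ℝ) (z : ℝ → ℝ) : ℝ :=
  sSup ((fun t => Real.exp (-(μ * t)) * |z t|) '' Icc 0 T)

/-- The operator `S` representing the right-hand side of the scalar Riccati–Volterra
equation: `(Sz)(t) = z₀(t) + ∫₀ᵗ a(t,s)z(s)ds + (1/2)∫₀ᵗ∫₀ᵗ b(t,s,σ)z(s)z(σ)ds dσ`. -/
noncomputable def riccOp (z₀ : ℝ → ℝ) (a : ℝ → ℝ → ℝ) (b : ℝ → ℝ → ℝ → ℝ)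
    (z : ℝ → ℝ) : ℝ → ℝ :=
  fun t => z₀ t + (∫ s in (0:ℝ)..t, a t s * z s) +
    (1/2) * ∫ s in (0:ℝ)..t, ∫ σ in (0:ℝ)..t, b t s σ * z s * z σ

open Real

theorem integral_exp_mul {c : ℝ} (hc : c ≠ 0) (t : ℝ) :
    ∫ s in (0 : ℝ)..t, exp (c * s) = (exp (c * t) - 1) / c := by
  rw [intervalIntegral.integral_comp_mul_left (fun s => exp s) hc, integral_exp, mul_zero,
    exp_zero, smul_eq_mul, inv_mul_eq_div]

theorem abs_intervalIntegral_le_mul_exp {f : ℝ → ℝ} {c C t : ℝ} (hc : c ≠ 0) (ht : 0 ≤ t)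
    (hf : ∀ s ∈ Ioc 0 t, |f s| ≤ C * exp (c * s)) :
    |∫ s in (0 : ℝ)..t, f s| ≤ C * ((exp (c * t) - 1) / c) := by
  rw [← integral_exp_mul hc, ← intervalIntegral.integral_const_mul]
  refine intervalIntegral.norm_integral_le_of_norm_le ht
    (Filter.Eventually.of_forall fun s hs => (norm_eq_abs _).trans_le (hf s hs)) ?_
  exact (continuous_const.mul (continuous_exp.comp (continuous_const_mul c))).intervalIntegrable _ _

theorem exp_neg_mul_mul_integral_exp_le {μ t T : ℝ} (hμ : 0 < μ) (htT : t ≤ T) :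
    exp (-(μ * t)) * ((exp (μ * t) - 1) / μ) ≤ (1 - exp (-(μ * T))) / μ := by
  have hexp : exp (-(μ * t)) * exp (μ * t) = 1 := by rw [← exp_add, neg_add_cancel, exp_zero]
  rw [← mul_div_assoc, mul_sub, hexp, mul_one]
  gcongr

theorem exp_neg_mul_sq_integral_exp_le {μ t T : ℝ} (hμ : 0 < μ) (ht : 0 ≤ t) (htT : t ≤ T) :
    exp (-(μ * t)) * ((exp (μ * t) - 1) / μ) ^ 2 / 2 ≤ (cosh (μ * T) - 1) / μ ^ 2 := by
  have hexp : exp (-(μ * t)) * exp (μ * t) = 1 := by rw [← exp_add, neg_add_cancel, exp_zero]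
  have hcosh : exp (-(μ * t)) * (exp (μ * t) - 1) ^ 2 / 2 = cosh (μ * t) - 1 := by
    rw [cosh_eq]; linear_combination (exp (μ * t) / 2 - 1) * hexp
  rw [div_pow, ← mul_div_assoc, div_div, mul_comm (μ ^ 2), ← div_div, hcosh]
  gcongr
  rw [cosh_le_cosh, abs_of_nonneg (by positivity), abs_of_nonneg (by nlinarith)]
  gcongr

theorem wnorm_nonneg (μ T : ℝ) (z : ℝ → ℝ) : 0 ≤ wnorm μ T z :=
  Real.sSup_nonneg fun _ ⟨_, _, hx⟩ => hx ▸ by positivity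

theorem abs_le_wnorm_mul_exp {μ T t : ℝ} {z : ℝ → ℝ} (hz : ContinuousOn z (Icc 0 T))
    (ht : t ∈ Icc 0 T) : |z t| ≤ wnorm μ T z * exp (μ * t) := by
  have hbdd : BddAbove ((fun t => exp (-(μ * t)) * |z t|) '' Icc 0 T) :=
    (isCompact_Icc.image_of_continuousOn
      ((continuous_exp.comp (continuous_const_mul μ).neg).continuousOn.mul hz.abs)).bddAbove
  have hle : exp (-(μ * t)) * |z t| ≤ wnorm μ T z := le_csSup hbdd ⟨t, ht, rfl⟩
  rwa [exp_neg, inv_mul_le_iff₀ (exp_pos _), mul_comm] at hle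

theorem wnorm_le {μ T r : ℝ} {f : ℝ → ℝ} (hr : 0 ≤ r)
    (hf : ∀ t ∈ Icc 0 T, exp (-(μ * t)) * |f t| ≤ r) : wnorm μ T f ≤ r :=
  Real.sSup_le (fun _ ⟨t, ht, hx⟩ => hx ▸ hf t ht) hr

theorem abs_double_integral_le_mul_exp {k : ℝ → ℝ → ℝ} {z : ℝ → ℝ} {μ t K r : ℝ} (hμ : 0 < μ)
    (ht : 0 ≤ t) (hk : ∀ s ∈ Ioc 0 t, ∀ σ ∈ Ioc 0 t, |k s σ| ≤ K)
    (hz : ∀ s ∈ Ioc 0 t, |z s| ≤ r * exp (μ * s)) :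
    |∫ s in (0 : ℝ)..t, ∫ σ in (0 : ℝ)..t, k s σ * z s * z σ| ≤
      K * r ^ 2 * ((exp (μ * t) - 1) / μ) ^ 2 := by
  have hE : 0 ≤ (exp (μ * t) - 1) / μ :=
    div_nonneg (sub_nonneg.2 (one_le_exp (by positivity))) hμ.le
  refine (abs_intervalIntegral_le_mul_exp (C := K * r ^ 2 * ((exp (μ * t) - 1) / μ)) hμ.ne' ht
    fun s hs => ?_).trans_eq (by ring)
  have hK : 0 ≤ K := (abs_nonneg _).trans (hk s hs s hs)
  have hr : 0 ≤ r := nonneg_of_mul_nonneg_left ((abs_nonneg _).trans (hz s hs)) (exp_pos _)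
  have inner : |∫ σ in (0 : ℝ)..t, k s σ * z s * z σ| ≤ K * |z s| * r * ((exp (μ * t) - 1) / μ) :=
    abs_intervalIntegral_le_mul_exp hμ.ne' ht fun σ hσ => by
      rw [abs_mul, abs_mul, mul_assoc _ r]
      gcongr
      exacts [hk s hs σ hσ, hz σ hσ]
  calc _ ≤ K * |z s| * r * ((exp (μ * t) - 1) / μ) := inner
    _ ≤ K * (r * exp (μ * s)) * r * ((exp (μ * t) - 1) / μ) := by gcongr; exact hz s hs
    _ = K * r ^ 2 * ((exp (μ * t) - 1) / μ) * exp (μ * s) := by ring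

theorem exp_neg_mul_abs_riccOp_le {z₀ z : ℝ → ℝ} {a : ℝ → ℝ → ℝ} {b : ℝ → ℝ → ℝ → ℝ}
    {μ T t abar bbar c r : ℝ} (hμ : 0 < μ)
    (ha : ∀ s ∈ Icc 0 t, |a t s| ≤ abar) (hb : ∀ s ∈ Icc 0 t, ∀ σ ∈ Icc 0 t, |b t s σ| ≤ bbar)
    (hz₀ : |z₀ t| ≤ c * exp (μ * t)) (hz : ∀ s ∈ Icc 0 t, |z s| ≤ r * exp (μ * s))
    (ht : 0 ≤ t) (htT : t ≤ T) :
    exp (-(μ * t)) * |riccOp z₀ a b z t| ≤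
      c + abar * ((1 - exp (-(μ * T))) / μ) * r + bbar * ((cosh (μ * T) - 1) / μ ^ 2) * r ^ 2 := by
  have hIoc : Ioc 0 t ⊆ Icc 0 t := Ioc_subset_Icc_self
  have habar : 0 ≤ abar := (abs_nonneg _).trans (ha t ⟨ht, le_rfl⟩)
  have hbbar : 0 ≤ bbar := (abs_nonneg _).trans (hb t ⟨ht, le_rfl⟩ t ⟨ht, le_rfl⟩)
  have hr : 0 ≤ r :=
    nonneg_of_mul_nonneg_left ((abs_nonneg _).trans (hz 0 ⟨le_rfl, ht⟩)) (exp_pos _)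
  have hlin : |∫ s in (0 : ℝ)..t, a t s * z s| ≤ abar * r * ((exp (μ * t) - 1) / μ) :=
    abs_intervalIntegral_le_mul_exp hμ.ne' ht fun s hs => by
      rw [abs_mul, mul_assoc]
      gcongr
      exacts [ha s (hIoc hs), hz s (hIoc hs)]
  have hquad := abs_double_integral_le_mul_exp (k := b t) hμ ht
    (fun s hs σ hσ => hb s (hIoc hs) σ (hIoc hσ)) fun s hs => hz s (hIoc hs)
  have hsum : |riccOp z₀ a b z t| ≤ c * exp (μ * t) + abar * r * ((exp (μ * t) - 1) / μ) +
      bbar * r ^ 2 * ((exp (μ * t) - 1) / μ) ^ 2 / 2 := by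
    refine (abs_add_three _ _ _).trans ?_
    rw [abs_mul, abs_of_pos (by norm_num : (0 : ℝ) < 1 / 2)]
    linarith
  have hexp : exp (-(μ * t)) * exp (μ * t) = 1 := by rw [← exp_add, neg_add_cancel, exp_zero]
  have hlinWeight := exp_neg_mul_mul_integral_exp_le hμ htT
  have hquadWeight := exp_neg_mul_sq_integral_exp_le hμ ht htT
  calc exp (-(μ * t)) * |riccOp z₀ a b z t|
      ≤ exp (-(μ * t)) * (c * exp (μ * t) + abar * r * ((exp (μ * t) - 1) / μ) +
          bbar * r ^ 2 * ((exp (μ * t) - 1) / μ) ^ 2 / 2) := by gcongr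
    _ = c + abar * r * (exp (-(μ * t)) * ((exp (μ * t) - 1) / μ)) +
          bbar * r ^ 2 * (exp (-(μ * t)) * ((exp (μ * t) - 1) / μ) ^ 2 / 2) := by
      linear_combination c * hexp
    _ ≤ _ := by
      rw [mul_right_comm abar, mul_right_comm bbar]
      gcongr

theorem riccati_volterra_invariant_ball_general
    (T μ : ℝ) (hμ : 0 < μ)
    (z₀ : ℝ → ℝ) (hz₀ : ContinuousOn z₀ (Icc 0 T))
    (a : ℝ → ℝ → ℝ)
    (b : ℝ → ℝ → ℝ → ℝ)
    (abar : ℝ)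
    (habar : IsGreatest ((fun p : ℝ × ℝ => |a p.1 p.2|) ''
      {p : ℝ × ℝ | 0 ≤ p.2 ∧ p.2 ≤ p.1 ∧ p.1 ≤ T}) abar)
    (bbar : ℝ)
    (hbbar : IsGreatest ((fun p : ℝ × ℝ × ℝ => |b p.1 p.2.1 p.2.2|) ''
      {p : ℝ × ℝ × ℝ | 0 ≤ p.2.1 ∧ p.2.1 ≤ p.1 ∧ 0 ≤ p.2.2 ∧ p.2.2 ≤ p.1 ∧ p.1 ≤ T}) bbar)
    (c₀ α β : ℝ)
    (hc₀ : c₀ = wnorm μ T z₀)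
    (hα : α = abar * ((1 - Real.exp (-(μ * T))) / μ))
    (hβ : β = bbar * ((Real.cosh (μ * T) - 1) / μ ^ 2))
    (rbar : ℝ)
    (hroot : β * rbar ^ 2 + (α - 1) * rbar + c₀ = 0) :
    ∀ z : ℝ → ℝ, ContinuousOn z (Icc 0 T) → wnorm μ T z ≤ rbar →
      wnorm μ T (riccOp z₀ a b z) ≤ rbar := by
  intro z hz hzr
  refine wnorm_le ((wnorm_nonneg μ T z).trans hzr) fun t ⟨ht, htT⟩ => ?_
  have hz' : ∀ s ∈ Icc 0 t, |z s| ≤ rbar * exp (μ * s) := fun s hs =>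
    (abs_le_wnorm_mul_exp hz ⟨hs.1, hs.2.trans htT⟩).trans (by gcongr)
  calc exp (-(μ * t)) * |riccOp z₀ a b z t| ≤ c₀ + α * rbar + β * rbar ^ 2 := by
        rw [hα, hβ]
        refine exp_neg_mul_abs_riccOp_le hμ (fun s hs => ?_) (fun s hs σ hσ => ?_)
          (hc₀ ▸ abs_le_wnorm_mul_exp hz₀ ⟨ht, htT⟩) hz' ht htT
        · exact habar.2 ⟨(t, s), ⟨hs.1, hs.2, htT⟩, rfl⟩
        · exact hbbar.2 ⟨(t, s, σ), ⟨hs.1, hs.2, hσ.1, hσ.2, htT⟩, rfl⟩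
    _ = rbar := by linear_combination hroot

/-- (Lemma 6.1) Under the root conditions on the trinomial
`φ(ξ) = βξ² + (α−1)ξ + c₀`, the ball `M = {z : ‖z‖_μ ≤ r̄}` is invariant under `S`. -/
theorem riccati_volterra_invariant_ball
    (T μ : ℝ) (hT : 0 < T) (hμ : 0 < μ)
    (z₀ : ℝ → ℝ) (hz₀ : ContinuousOn z₀ (Icc 0 T))
    (a : ℝ → ℝ → ℝ)
    (hacont : ContinuousOn (fun p : ℝ × ℝ => a p.1 p.2)
      {p : ℝ × ℝ | 0 ≤ p.2 ∧ p.2 ≤ p.1 ∧ p.1 ≤ T})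
    (b : ℝ → ℝ → ℝ → ℝ)
    (hbcont : ContinuousOn (fun p : ℝ × ℝ × ℝ => b p.1 p.2.1 p.2.2)
      {p : ℝ × ℝ × ℝ | 0 ≤ p.2.1 ∧ p.2.1 ≤ p.1 ∧ 0 ≤ p.2.2 ∧ p.2.2 ≤ p.1 ∧ p.1 ≤ T})
    (abar : ℝ)
    (habar : IsGreatest ((fun p : ℝ × ℝ => |a p.1 p.2|) ''
      {p : ℝ × ℝ | 0 ≤ p.2 ∧ p.2 ≤ p.1 ∧ p.1 ≤ T}) abar)
    (bbar : ℝ)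
    (hbbar : IsGreatest ((fun p : ℝ × ℝ × ℝ => |b p.1 p.2.1 p.2.2|) ''
      {p : ℝ × ℝ × ℝ | 0 ≤ p.2.1 ∧ p.2.1 ≤ p.1 ∧ 0 ≤ p.2.2 ∧ p.2.2 ≤ p.1 ∧ p.1 ≤ T}) bbar)
    (c₀ α β : ℝ)
    (hc₀ : c₀ = wnorm μ T z₀)
    (hα : α = abar * ((1 - Real.exp (-(μ * T))) / μ))
    (hβ : β = bbar * ((Real.cosh (μ * T) - 1) / μ ^ 2))
    (rbar : ℝ)
    (hroot : β * rbar ^ 2 + (α - 1) * rbar + c₀ = 0)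
    (hlargest : ∀ ξ : ℝ, β * ξ ^ 2 + (α - 1) * ξ + c₀ = 0 → ξ ≤ rbar)
    (hαlt : α < 1) (hdisc : c₀ * β ≤ (1/4) * (α - 1) ^ 2) (hc₀le : c₀ ≤ rbar) :
    ∀ z : ℝ → ℝ, ContinuousOn z (Icc 0 T) → wnorm μ T z ≤ rbar →
      wnorm μ T (riccOp z₀ a b z) ≤ rbar :=
  riccati_volterra_invariant_ball_general T μ hμ z₀ hz₀ a b abar habar bbar hbbar c₀ α β hc₀ hα hβ
    rbar hroot
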